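/- arXiv:1912.10034 — 6 statements merged into one kernel-verified Lean document; each statement's English description precedes it below -/
import Mathlib

section
/- Let n, d ≥ 1, let D be an n×d complex matrix and let C be an n×n complex matrix, and let B = Dᴴ C D. If the real d×d matrix Re B (entrywise real part of B) is invertible, then d ≤ 2n. -/
open Matrix Complex

/-!
A real vector `x` with `D x = 0` also satisfies `(Re B) x = Re (B x) = Re (Dᴴ C D x) = 0`, so
invertibility of `Re B` makes `x ↦ D x` an injective `ℝ`-linear map `ℝ^d → ℂ^n`, and
`dim_ℝ ℂ^n = 2n`.
-/

section

variable {l m n : Type*} [Fintype n]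

noncomputable def Matrix.realMulVecLin (M : Matrix m n ℂ) : (n → ℝ) →ₗ[ℝ] (m → ℂ) :=
  (M.mulVecLin.restrictScalars ℝ).comp (LinearMap.compLeft ofRealAm.toLinearMap n)

theorem Matrix.realMulVecLin_apply (M : Matrix m n ℂ) (x : n → ℝ) :
    M.realMulVecLin x = M *ᵥ (ofReal ∘ x) :=
  rfl

theorem Matrix.map_re_mulVec (M : Matrix l n ℂ) (x : n → ℝ) :
    M.map re *ᵥ x = re ∘ (M *ᵥ (ofReal ∘ x)) := by
  ext i
  simp [mulVec, dotProduct, re_sum]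

theorem Matrix.injective_realMulVecLin_of_isUnit_map_re (A : Matrix n m ℂ) (D : Matrix m n ℂ)
    [Fintype m] [DecidableEq n] (h : IsUnit ((A * D).map re)) :
    Function.Injective D.realMulVecLin := by
  rw [← LinearMap.ker_eq_bot, LinearMap.ker_eq_bot']
  intro x hx
  rw [realMulVecLin_apply] at hx
  have hReB : (A * D).map re *ᵥ x = 0 := by
    rw [map_re_mulVec, ← mulVec_mulVec, hx, mulVec_zero]
    rfl
  exact (mulVec_injective_iff_isUnit.mpr h) (hReB.trans (mulVec_zero _).symm)

theorem Matrix.card_le_two_mul_card_of_isUnit_map_re (A : Matrix n m ℂ) (D : Matrix m n ℂ)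
    [Fintype m] [DecidableEq n] (h : IsUnit ((A * D).map re)) :
    Fintype.card n ≤ 2 * Fintype.card m := by
  have := LinearMap.finrank_le_finrank_of_injective
    (injective_realMulVecLin_of_isUnit_map_re A D h)
  simpa [Module.finrank_pi_fintype, finrank_real_complex, mul_comm] using this

end

theorem stmt_3_general (n d : ℕ)
    (D : Matrix (Fin n) (Fin d) ℂ) (C : Matrix (Fin n) (Fin n) ℂ)
    (B : Matrix (Fin d) (Fin d) ℂ) (hB : B = Dᴴ * C * D)
    (h : IsUnit (Matrix.of fun i j => (B i j).re)) : d ≤ 2 * n := by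
  subst hB
  simpa using card_le_two_mul_card_of_isUnit_map_re (Dᴴ * C) D h

/-- If the entrywise real part of `B = Dᴴ C D` is invertible, with `D` an
`n × d` complex matrix, then `d ≤ 2n`. -/
theorem stmt_3 (n d : ℕ) (hn : 1 ≤ n) (hd : 1 ≤ d)
    (D : Matrix (Fin n) (Fin d) ℂ) (C : Matrix (Fin n) (Fin n) ℂ)
    (B : Matrix (Fin d) (Fin d) ℂ) (hB : B = Dᴴ * C * D)
    (h : IsUnit (Matrix.of fun i j => (B i j).re)) : d ≤ 2 * n :=
  stmt_3_general n d D C B hB h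
end

section
/- Let n, d ≥ 1, let A₁,…,A_d be Hermitian n×n complex matrices and let V ∈ ℂⁿ. Then the following are equivalent: (1) there exist c = (c₁,…,c_d) ∈ ℝᵈ with c ≠ 0 and a map g : ℂ → ℂⁿ holomorphic on the open unit disc Δ, continuous on the closed unit disc, such that g(ζ) = (conj(ζ) − 1)·(∑_{j=1}^d c_j · conj(A_jV)) for every ζ with |ζ| = 1; (2) the vectors A₁V, …, A_dV are linearly dependent over ℝ in ℂⁿ. -/
/-!
On the unit circle `conj ζ = ζ⁻¹`, so `ζ • g ζ` and `(1 - ζ) • W` are holomorphic on the disc,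
continuous up to the boundary, and agree on the circle. By the maximum principle they agree on
the disc, and `ζ = 0` gives `W = 0`. Conversely `W = 0` is realised by `g = 0`. Since the `cⱼ` are
real, `∑ cⱼ • conj (AⱼV) = conj (∑ cⱼ • AⱼV)`, so `W = 0` is an `ℝ`-linear relation among the `AⱼV`.
-/

open Complex Metric

theorem eq_zero_of_eqOn_sphere_conj_sub_one_smul {F : Type*} [NormedAddCommGroup F]
    [NormedSpace ℂ F] {g : ℂ → F} {W : F} (hg : DifferentiableOn ℂ g (ball 0 1))
    (hg' : ContinuousOn g (closedBall 0 1))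
    (hgW : ∀ ζ : ℂ, ‖ζ‖ = 1 → g ζ = (starRingEnd ℂ ζ - 1) • W) :
    W = 0 := by
  have hζg : DiffContOnCl ℂ (fun ζ : ℂ => ζ • g ζ) (ball 0 1) :=
    ⟨differentiableOn_id.smul hg, by
      rw [closure_ball 0 one_ne_zero]; exact continuousOn_id.smul hg'⟩
  have hW : DiffContOnCl ℂ (fun ζ : ℂ => (1 - ζ) • W) (ball 0 1) :=
    ((differentiable_const 1).sub differentiable_id).diffContOnCl.smul_const W
  have hsphere : Set.EqOn (fun ζ : ℂ => ζ • g ζ) (fun ζ => (1 - ζ) • W)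
      (frontier (ball 0 1)) := by
    intro ζ hζ
    rw [frontier_ball 0 one_ne_zero, mem_sphere_zero_iff_norm] at hζ
    have hζ_conj : ζ * starRingEnd ℂ ζ = 1 := by
      rw [mul_conj, normSq_eq_norm_sq, hζ]; norm_num
    simp only [hgW ζ hζ, smul_smul, mul_sub, mul_one, hζ_conj]
  simpa using (eqOn_of_eqOn_frontier isBounded_ball hζg hW hsphere (mem_ball_self one_pos)).symm

theorem exists_eqOn_sphere_conj_sub_one_smul_iff {F : Type*} [NormedAddCommGroup F]
    [NormedSpace ℂ F] (W : F) :
    (∃ g : ℂ → F, DifferentiableOn ℂ g (ball 0 1) ∧ ContinuousOn g (closedBall 0 1) ∧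
      ∀ ζ : ℂ, ‖ζ‖ = 1 → g ζ = (starRingEnd ℂ ζ - 1) • W) ↔ W = 0 := by
  constructor
  · rintro ⟨g, hg, hg', hgW⟩
    exact eq_zero_of_eqOn_sphere_conj_sub_one_smul hg hg' hgW
  · rintro rfl
    exact ⟨0, differentiableOn_const 0, continuousOn_const, fun ζ _ => (smul_zero _).symm⟩

theorem sum_ofReal_smul_star {ι E : Type*} [Fintype ι] [AddCommGroup E] [Module ℂ E]
    [StarAddMonoid E] [StarModule ℂ E] (c : ι → ℝ) (v : ι → E) :
    ∑ j, (c j : ℂ) • star (v j) = star (∑ j, c j • v j) := by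
  simp only [star_sum, ← coe_smul, star_smul, Complex.star_def, conj_ofReal]

theorem stmt_7_general (n d : ℕ)
    (A : Fin d → Matrix (Fin n) (Fin n) ℂ)
    (V : Fin n → ℂ) :
    (∃ c : Fin d → ℝ, c ≠ 0 ∧ ∃ g : ℂ → (Fin n → ℂ),
        DifferentiableOn ℂ g (ball (0 : ℂ) 1) ∧
        ContinuousOn g (closedBall (0 : ℂ) 1) ∧
        ∀ ζ : ℂ, ‖ζ‖ = 1 →
          g ζ = (starRingEnd ℂ ζ - 1) •
            ∑ j, (c j : ℂ) • star ((A j).mulVec V)) ↔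
      ¬ LinearIndependent ℝ (fun j => (A j).mulVec V) := by
  simp only [exists_eqOn_sphere_conj_sub_one_smul_iff, sum_ofReal_smul_star, star_eq_zero,
    Fintype.not_linearIndependent_iff, Function.ne_iff]
  exact exists_congr fun c => and_comm

/-- Lemma 2.3: the boundary map `ζ ↦ (conj ζ − 1)·∑ cⱼ conj(AⱼV)` extends
holomorphically to the disc for some `c ∈ ℝᵈ \ {0}` if and only if the
vectors `A₁V,…,A_dV` are ℝ-linearly dependent. -/
theorem stmt_7 (n d : ℕ) (hn : 1 ≤ n) (hd : 1 ≤ d)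
    (A : Fin d → Matrix (Fin n) (Fin n) ℂ) (hA : ∀ j, (A j).IsHermitian)
    (V : Fin n → ℂ) :
    (∃ c : Fin d → ℝ, c ≠ 0 ∧ ∃ g : ℂ → (Fin n → ℂ),
        DifferentiableOn ℂ g (ball (0 : ℂ) 1) ∧
        ContinuousOn g (closedBall (0 : ℂ) 1) ∧
        ∀ ζ : ℂ, ‖ζ‖ = 1 →
          g ζ = (starRingEnd ℂ ζ - 1) •
            ∑ j, (c j : ℂ) • star ((A j).mulVec V)) ↔
      ¬ LinearIndependent ℝ (fun j => (A j).mulVec V) :=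
  stmt_7_general n d A V
end

section
/- Let u : ℂ → ℂ be holomorphic on the open unit disc Δ and continuous on the closed unit disc, and suppose u(ζ) = ζ·conj(u(ζ)) for every ζ with |ζ| = 1. Then there exists a ∈ ℂ such that u(ζ) = a + conj(a)·ζ for every ζ in the closed unit disc. -/
/-!
Subtracting the trivial solution `a + conj a · ζ` with `a = u 0` leaves a solution `w` with
`w 0 = 0`. Then `g = w / z` is holomorphic, and `F = z g²` is holomorphic with `F 0 = 0` and
`F = w · conj w = |w|²` on the circle. The mean value property makes the circle average of
`|w|²` vanish, so `w = 0` on the circle and, by the maximum principle, on the closed disc.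
-/

open Complex ComplexConjugate Metric Set Real Topology

theorem DiffContOnCl.dslope {E : Type*} [NormedAddCommGroup E] [NormedSpace ℂ E] [CompleteSpace E]
    {f : ℂ → E} {s : Set ℂ} {c : ℂ} (hf : DiffContOnCl ℂ f s) (hs : s ∈ 𝓝 c) :
    DiffContOnCl ℂ (dslope f c) s := by
  refine ⟨(differentiableOn_dslope hs).2 hf.1, fun x hx => ?_⟩
  rcases eq_or_ne x c with rfl | hxc
  · exact (continuousAt_dslope_same.2 (hf.1.differentiableAt hs)).continuousWithinAt
  · exact (continuousWithinAt_dslope_of_ne hxc).2 (hf.2 x hx)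

theorem sphere_subset_closure_ball {E : Type*} [NormedAddCommGroup E] [NormedSpace ℝ E]
    (c : E) {r : ℝ} (hr : r ≠ 0) : sphere c r ⊆ closure (ball c r) :=
  frontier_ball c hr ▸ frontier_subset_closure

theorem Real.circleAverage_pos {f : ℂ → ℝ} {c : ℂ} {R : ℝ}
    (hf : ContinuousOn f (sphere c |R|)) (hf_nonneg : ∀ z ∈ sphere c |R|, 0 ≤ f z)
    (hf_pos : ∃ z ∈ sphere c |R|, 0 < f z) : 0 < circleAverage f c R := by
  obtain ⟨z, hz, hfz⟩ := hf_pos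
  rw [← image_circleMap_Ioc] at hz
  obtain ⟨θ, hθ, rfl⟩ := hz
  rw [circleAverage_def, smul_eq_mul]
  refine mul_pos (by positivity) (intervalIntegral.integral_pos two_pi_pos ?_
    (fun t _ => hf_nonneg _ (circleMap_mem_sphere' c R t)) ⟨θ, Ioc_subset_Icc_self hθ, hfz⟩)
  exact (hf.comp_continuous (continuous_circleMap c R) (circleMap_mem_sphere' c R)).continuousOn

theorem sub_add_conj_mul_eq_mul_conj {ζ v : ℂ} (hζ : ‖ζ‖ = 1) (hv : v = ζ * conj v) (a : ℂ) :
    v - (a + conj a * ζ) = ζ * conj (v - (a + conj a * ζ)) := by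
  have hζζ : ζ * conj ζ = 1 := by
    rw [mul_conj, normSq_eq_norm_sq, hζ]; norm_num
  simp only [map_sub, map_add, map_mul, conj_conj]
  linear_combination hv + a * hζζ

theorem mul_dslope_sq_eq_normSq {w : ℂ → ℂ} {ζ : ℂ} (hw₀ : w 0 = 0) (hζ : ζ ≠ 0)
    (hw : w ζ = ζ * conj (w ζ)) : ζ * dslope w 0 ζ ^ 2 = normSq (w ζ) := by
  rw [dslope_of_ne _ hζ, slope_def_field, hw₀, sub_zero, sub_zero, ← mul_conj]
  field_simp
  linear_combination w ζ * hw

theorem circleAverage_normSq_eq_zero {w : ℂ → ℂ} (hw : DiffContOnCl ℂ w (ball 0 1))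
    (hw₀ : w 0 = 0) (hb : ∀ ζ : ℂ, ‖ζ‖ = 1 → w ζ = ζ * conj (w ζ)) :
    circleAverage (fun z => normSq (w z)) 0 1 = 0 := by
  set F : ℂ → ℂ := fun z => z * dslope w 0 z ^ 2
  have hg := hw.dslope (ball_mem_nhds 0 one_pos)
  have hF : DiffContOnCl ℂ F (ball 0 1) :=
    ⟨differentiableOn_id.mul (hg.1.pow 2), continuousOn_id.mul (hg.2.pow 2)⟩
  have hF_sphere : EqOn (reCLM ∘ F) (fun z => normSq (w z)) (sphere 0 |1|) := fun ζ hζ => by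
    have hζ : ‖ζ‖ = 1 := by simpa using hζ
    have hζ₀ : ζ ≠ 0 := norm_ne_zero_iff.1 (hζ ▸ one_ne_zero)
    simp only [Function.comp_apply, reCLM_apply, F, mul_dslope_sq_eq_normSq hw₀ hζ₀ (hb ζ hζ),
      ofReal_re]
  have hF_int : CircleIntegrable F 0 1 :=
    (hF.continuousOn.mono (sphere_subset_closure_ball 0 one_ne_zero)).circleIntegrable zero_le_one
  rw [← circleAverage_congr_sphere hF_sphere, reCLM.circleAverage_comp_comm hF_int,
    (abs_one (α := ℝ) ▸ hF :).circleAverage]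
  simp [F]

theorem eqOn_zero_of_eq_mul_conj {w : ℂ → ℂ} (hw : DiffContOnCl ℂ w (ball 0 1))
    (hw₀ : w 0 = 0) (hb : ∀ ζ : ℂ, ‖ζ‖ = 1 → w ζ = ζ * conj (w ζ)) :
    EqOn w 0 (closedBall 0 1) := by
  have hsphere : EqOn w 0 (sphere 0 1) := fun ζ hζ => by
    by_contra hne
    have hcont : ContinuousOn (fun z => normSq (w z)) (sphere 0 1) :=
      continuous_normSq.comp_continuousOn
        (hw.continuousOn.mono (sphere_subset_closure_ball 0 one_ne_zero))
    rw [← abs_one (α := ℝ)] at hcont hζ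
    have hpos := circleAverage_pos hcont (fun _ _ => normSq_nonneg _) ⟨ζ, hζ, normSq_pos.2 hne⟩
    exact hpos.ne' (circleAverage_normSq_eq_zero hw hw₀ hb)
  rw [← closure_ball 0 one_ne_zero]
  exact eqOn_closure_of_eqOn_frontier isBounded_ball hw diffContOnCl_const
    (frontier_ball (0 : ℂ) one_ne_zero ▸ hsphere)

/-- Scalar Riemann–Hilbert fact: a holomorphic function on the disc,
continuous up to the boundary, with `u(ζ) = ζ·conj(u(ζ))` on the unit circle
is of the form `a + conj(a)·ζ`. -/
theorem stmt_10 (u : ℂ → ℂ)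
    (hu : DifferentiableOn ℂ u (ball (0 : ℂ) 1))
    (hc : ContinuousOn u (closedBall (0 : ℂ) 1))
    (hb : ∀ ζ : ℂ, ‖ζ‖ = 1 → u ζ = ζ * starRingEnd ℂ (u ζ)) :
    ∃ a : ℂ, ∀ ζ ∈ closedBall (0 : ℂ) 1, u ζ = a + starRingEnd ℂ a * ζ := by
  refine ⟨u 0, fun ζ hζ => sub_eq_zero.1 ?_⟩
  have hw : DiffContOnCl ℂ (fun z => u z - (u 0 + conj (u 0) * z)) (ball 0 1) :=
    DiffContOnCl.sub ⟨hu, closure_ball (0 : ℂ) one_ne_zero ▸ hc⟩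
      (differentiable_const _ |>.add (differentiable_const _ |>.mul differentiable_id)).diffContOnCl
  exact eqOn_zero_of_eq_mul_conj hw (by simp)
    (fun ζ hζ => sub_add_conj_mul_eq_mul_conj hζ (hb ζ hζ) _) hζ
end

section
/- Let g : ℂ → ℂ be holomorphic on the open unit disc Δ and continuous on the closed unit disc, and suppose conj(ζ)·g(ζ) is a real number for every ζ with |ζ| = 1. Then there exist a ∈ ℂ and b ∈ ℝ such that g(ζ) = a + b·ζ + conj(a)·ζ² for every ζ in the closed unit disc. -/
/-!
Put `a = g 0` and `q ζ = g ζ - a - conj a ζ²`, so that `q 0 = 0` and `q ζ = ζ h ζ` with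
`h = dslope q 0` holomorphic on the disc and continuous up to the circle. On the circle
`conj ζ = ζ⁻¹`, hence `h ζ = conj ζ g ζ - (conj ζ a + conj (conj ζ a))` is real. The maximum
principle for `exp (± i h)` makes `Im h` vanish on the closed disc, and by the open mapping theorem
`h` is then a real constant `b`.
-/

open Complex Metric

variable {U : Set ℂ} {f : ℂ → ℂ}

theorem Complex.re_le_of_forall_mem_frontier_re_le (hU : Bornology.IsBounded U)
    (hf : DiffContOnCl ℂ f U) {C : ℝ} (hC : ∀ z ∈ frontier U, (f z).re ≤ C) {z : ℂ}
    (hz : z ∈ closure U) : (f z).re ≤ C := by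
  have hexp : DiffContOnCl ℂ (fun w => exp (f w)) U := differentiable_exp.comp_diffContOnCl hf
  have := norm_le_of_forall_mem_frontier_norm_le hU hexp (C := Real.exp C)
    (fun w hw => by simpa [norm_exp] using hC w hw) hz
  simpa [norm_exp] using this

theorem Complex.im_eq_zero_of_forall_mem_frontier_im_eq_zero (hU : Bornology.IsBounded U)
    (hf : DiffContOnCl ℂ f U) (him : ∀ z ∈ frontier U, (f z).im = 0) {z : ℂ}
    (hz : z ∈ closure U) : (f z).im = 0 := by
  have hle := re_le_of_forall_mem_frontier_re_le (f := fun w => -I * f w) hU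
    (hf.const_smul (-I)) (C := 0) (fun w hw => by simp [him w hw]) hz
  have hge := re_le_of_forall_mem_frontier_re_le (f := fun w => I * f w) hU
    (hf.const_smul I) (C := 0) (fun w hw => by simp [him w hw]) hz
  simp only [mul_re, neg_re, neg_im, I_re, I_im] at hle hge
  linarith

theorem DiffContOnCl.exists_eq_ofReal_of_forall_mem_frontier_im_eq_zero
    (hf : DiffContOnCl ℂ f U) (hUb : Bornology.IsBounded U) (hUo : IsOpen U)
    (hUc : IsConnected U) (him : ∀ z ∈ frontier U, (f z).im = 0) :
    ∃ b : ℝ, ∀ z ∈ closure U, f z = b := by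
  obtain ⟨b, hb⟩ := (hf.differentiableOn.analyticOnNhd hUo).eq_const_add_im_mul_I_of_re_eq_const
    (fun z hz => im_eq_zero_of_forall_mem_frontier_im_eq_zero hUb hf him (subset_closure hz))
    hUo hUc
  refine ⟨b, fun z hz => ?_⟩
  refine Set.EqOn.of_subset_closure (fun w hw => ?_) hf.continuousOn continuousOn_const
    subset_closure subset_rfl hz
  simpa using hb w hw

theorem diffContOnCl_dslope {a : ℂ} (hf : DiffContOnCl ℂ f U) (hU : IsOpen U) (ha : a ∈ U) :
    DiffContOnCl ℂ (dslope f a) U := by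
  have hd : DifferentiableOn ℂ (dslope f a) U :=
    (differentiableOn_dslope (hU.mem_nhds ha)).mpr hf.differentiableOn
  refine ⟨hd, fun z hz => ?_⟩
  rcases eq_or_ne z a with rfl | hza
  · exact (hd.differentiableAt (hU.mem_nhds ha)).continuousAt.continuousWithinAt
  · exact (continuousWithinAt_dslope_of_ne hza).mpr (hf.continuousOn z hz)

theorem Complex.im_eq_zero_of_mul_eq_sub_sub_conj_mul_sq {ζ a w z : ℂ} (hζ : ‖ζ‖ = 1)
    (hz : (starRingEnd ℂ ζ * z).im = 0) (hw : ζ * w = z - a - starRingEnd ℂ a * ζ ^ 2) :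
    w.im = 0 := by
  have hζζ : starRingEnd ℂ ζ * ζ = 1 := by
    rw [conj_mul', hζ]; norm_num
  have hw' : w = starRingEnd ℂ ζ * z -
      (starRingEnd ℂ (starRingEnd ℂ a * ζ) + starRingEnd ℂ a * ζ) := by
    simp only [map_mul, conj_conj]
    linear_combination (starRingEnd ℂ ζ) * hw - (w + starRingEnd ℂ a * ζ) * hζζ
  rw [hw', sub_im, hz, add_im, conj_im]
  ring

/-- If `g` is holomorphic on the disc, continuous up to the boundary, and
`conj(ζ)·g(ζ)` is real on the unit circle, then
`g(ζ) = a + b·ζ + conj(a)·ζ²` with `b` real. -/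
theorem stmt_11 (g : ℂ → ℂ)
    (hg : DifferentiableOn ℂ g (ball (0 : ℂ) 1))
    (hc : ContinuousOn g (closedBall (0 : ℂ) 1))
    (hb : ∀ ζ : ℂ, ‖ζ‖ = 1 → ∃ r : ℝ, starRingEnd ℂ ζ * g ζ = r) :
    ∃ (a : ℂ) (b : ℝ), ∀ ζ ∈ closedBall (0 : ℂ) 1,
      g ζ = a + b * ζ + starRingEnd ℂ a * ζ ^ 2 := by
  set a := g 0
  set q : ℂ → ℂ := fun ζ => g ζ - a - starRingEnd ℂ a * ζ ^ 2
  have hq : DiffContOnCl ℂ q (ball 0 1) :=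
    ((DiffContOnCl.mk_ball hg hc).sub_const a).sub
      (differentiable_const _ |>.mul (differentiable_pow 2)).diffContOnCl
  have hq_eq (ζ : ℂ) : ζ * dslope q 0 ζ = q ζ := by
    simpa [q, a] using sub_smul_dslope q 0 ζ
  have hsphere (ζ : ℂ) (hζ : ζ ∈ frontier (ball (0 : ℂ) 1)) : (dslope q 0 ζ).im = 0 := by
    rw [frontier_ball 0 one_ne_zero, mem_sphere_zero_iff_norm] at hζ
    obtain ⟨r, hr⟩ := hb ζ hζ
    exact im_eq_zero_of_mul_eq_sub_sub_conj_mul_sq hζ (by rw [hr, ofReal_im]) (hq_eq ζ)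
  obtain ⟨b, hqb⟩ := (diffContOnCl_dslope hq isOpen_ball (mem_ball_self one_pos))
    |>.exists_eq_ofReal_of_forall_mem_frontier_im_eq_zero isBounded_ball isOpen_ball
      ((convex_ball 0 1).isConnected (nonempty_ball.mpr one_pos)) hsphere
  refine ⟨a, b, fun ζ hζ => ?_⟩
  rw [← closure_ball 0 one_ne_zero] at hζ
  have hζb := hq_eq ζ
  rw [hqb ζ hζ] at hζb
  linear_combination -hζb
end

section
/- Let f, g : ℂ → ℂ be holomorphic on the open unit disc Δ and continuous on the closed unit disc, and suppose f(ζ) = −ζ·conj(g(ζ)) for every ζ with |ζ| = 1. Then there exist a, b ∈ ℂ such that f(ζ) = a + b·ζ and g(ζ) = −conj(b) − conj(a)·ζ for every ζ in the closed unit disc; in particular both f and g are polynomials of degree at most 1. -/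
/-!
On the unit circle `conj z = z⁻¹`, so conjugating a contour integral of `conj ∘ g` turns it into
a contour integral of `g` against a kernel that is holomorphic on the closed disc, and that
vanishes by Cauchy's theorem. Insert `f z = -z * conj (g z)` into Cauchy's formula for `f (w)` and
split `z / (z - w) = 1 + w / z + w ^ 2 / (z * (z - w))`: the last term gives such a vanishing
integral, so `f` is affine. The boundary relation then determines `g` on the circle, and the
maximum principle extends the formula to the disc.
-/

open Complex Metric Set Real
open scoped ComplexConjugate

theorem conj_circleIntegral (φ : ℂ → ℂ) (c : ℂ) (R : ℝ) :
    conj (∮ z in C(c, R), φ z) = -∮ z in C(c, R), R ^ 2 / (z - c) ^ 2 * conj (φ z) := by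
  simp only [circleIntegral, ← intervalIntegral.intervalIntegral_conj,
    ← intervalIntegral.integral_neg, deriv_circleMap, circleMap_sub_center, smul_eq_mul]
  refine intervalIntegral.integral_congr fun θ _ => ?_
  set u := circleMap 0 R θ
  have hu : conj u * u = (R : ℂ) ^ 2 := by
    rw [mul_comm, mul_conj, normSq_eq_norm_sq, norm_circleMap_zero]; norm_cast; simp
  rcases eq_or_ne u 0 with h | h
  · simp [h]
  · rw [map_mul, map_mul, conj_I, ← hu]
    field_simp

theorem circleIntegral_conj_div_mul_sub_eq_zero {g : ℂ → ℂ} (hg : DiffContOnCl ℂ g (ball 0 1))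
    {w : ℂ} (hw : w ∈ ball (0 : ℂ) 1) :
    ∮ z in C(0, 1), conj (g z) / (z * (z - w)) = 0 := by
  have hw' : ‖w‖ < 1 := mem_ball_zero_iff.mp hw
  have hden : ∀ z ∈ closure (ball (0 : ℂ) 1), 1 - conj w * z ≠ 0 := by
    intro z hz
    rw [closure_ball _ one_ne_zero, mem_closedBall_zero_iff] at hz
    refine sub_ne_zero.mpr (ne_of_apply_ne norm fun h => ?_)
    rw [norm_one, norm_mul, norm_conj] at h
    nlinarith [norm_nonneg w]
  have hinv : DiffContOnCl ℂ (fun z => (1 - conj w * z)⁻¹) (ball 0 1) :=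
    (by fun_prop : Differentiable ℂ fun z => 1 - conj w * z).diffContOnCl.inv hden
  have hcauchy : ∮ z in C(0, 1), (1 - conj w * z)⁻¹ • g z = 0 :=
    (hinv.smul hg).circleIntegral_eq_zero zero_le_one
  apply (starRingEnd ℂ).injective
  rw [conj_circleIntegral, map_zero, neg_eq_zero]
  refine (circleIntegral.integral_congr zero_le_one fun z hz => ?_).trans hcauchy
  have hz1 : ‖z‖ = 1 := mem_sphere_zero_iff_norm.mp hz
  have hz0 : z ≠ 0 := ne_zero_of_norm_ne_zero (by rw [hz1]; exact one_ne_zero)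
  have hd := hden z (closure_ball (0 : ℂ) one_ne_zero ▸ sphere_subset_closedBall hz)
  simp only [map_div₀, map_mul, map_sub, conj_conj, ← inv_eq_conj hz1, smul_eq_mul]
  field_simp
  simp

theorem exists_eqOn_ball_affine_of_eq_neg_mul_conj {f g : ℂ → ℂ}
    (hf : DiffContOnCl ℂ f (ball 0 1)) (hg : DiffContOnCl ℂ g (ball 0 1))
    (hb : ∀ z ∈ sphere (0 : ℂ) 1, f z = -(z * conj (g z))) :
    ∃ a b : ℂ, EqOn f (fun z => a + b * z) (ball 0 1) := by
  have hG : ContinuousOn (fun z => conj (g z)) (sphere 0 1) :=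
    continuous_conj.comp_continuousOn
      (hg.continuousOn.mono (closure_ball (0 : ℂ) one_ne_zero ▸ sphere_subset_closedBall))
  have hz0 : ∀ z ∈ sphere (0 : ℂ) 1, z ≠ 0 := fun z hz => ne_of_mem_sphere hz one_ne_zero
  refine ⟨-(2 * π * I)⁻¹ * ∮ z in C(0, 1), conj (g z),
    -(2 * π * I)⁻¹ * ∮ z in C(0, 1), conj (g z) / z, fun w hw => ?_⟩
  have hzw : ∀ z ∈ sphere (0 : ℂ) 1, z - w ≠ 0 := fun z hz =>
    sub_ne_zero.mpr (ne_of_mem_of_not_mem hz (by simpa using (mem_ball_zero_iff.mp hw).ne))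
  have hG₁ : ContinuousOn (fun z => conj (g z) / z) (sphere 0 1) :=
    hG.div continuousOn_id hz0
  have hG₂ : ContinuousOn (fun z => conj (g z) / (z * (z - w))) (sphere 0 1) :=
    hG.div (by fun_prop) fun z hz => mul_ne_zero (hz0 z hz) (hzw z hz)
  have hsplit : ∮ z in C(0, 1), (z - w)⁻¹ • f z = -1 * (∮ z in C(0, 1), conj (g z))
      + -w * (∮ z in C(0, 1), conj (g z) / z)
      + -w ^ 2 * ∮ z in C(0, 1), conj (g z) / (z * (z - w)) := by
    simp only [← circleIntegral.integral_const_mul]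
    rw [← circleIntegral.integral_add, ← circleIntegral.integral_add]
    · refine circleIntegral.integral_congr zero_le_one fun z hz => ?_
      have := hz0 z hz
      have := hzw z hz
      rw [smul_eq_mul, hb z hz]
      field_simp
      ring
    all_goals exact ContinuousOn.circleIntegrable zero_le_one (by fun_prop)
  rw [← hf.two_pi_i_inv_smul_circleIntegral_sub_inv_smul hw, hsplit,
    circleIntegral_conj_div_mul_sub_eq_zero hg hw, smul_eq_mul]
  ring

/-- The 2×2 coupled boundary system `f(ζ) = −ζ·conj(g(ζ))` on the circle has
only solutions which are polynomials of degree at most 1, of the indicated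
form (all partial indices equal 1). -/
theorem stmt_13 (f g : ℂ → ℂ)
    (hf : DifferentiableOn ℂ f (ball (0 : ℂ) 1))
    (hfc : ContinuousOn f (closedBall (0 : ℂ) 1))
    (hg : DifferentiableOn ℂ g (ball (0 : ℂ) 1))
    (hgc : ContinuousOn g (closedBall (0 : ℂ) 1))
    (hb : ∀ ζ : ℂ, ‖ζ‖ = 1 → f ζ = -(ζ * starRingEnd ℂ (g ζ))) :
    ∃ a b : ℂ, ∀ ζ ∈ closedBall (0 : ℂ) 1,
      f ζ = a + b * ζ ∧ g ζ = -starRingEnd ℂ b - starRingEnd ℂ a * ζ := by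
  have hf' : DiffContOnCl ℂ f (ball 0 1) := .mk_ball hf hfc
  have hg' : DiffContOnCl ℂ g (ball 0 1) := .mk_ball hg hgc
  obtain ⟨a, b, hab⟩ := exists_eqOn_ball_affine_of_eq_neg_mul_conj hf' hg'
    fun z hz => hb z (mem_sphere_zero_iff_norm.mp hz)
  have hf_aff : EqOn f (fun z => a + b * z) (closedBall 0 1) :=
    hab.of_subset_closure hfc (by fun_prop) ball_subset_closedBall
      (closure_ball (0 : ℂ) one_ne_zero).ge
  have hg_sphere : EqOn g (fun z => -conj b - conj a * z) (frontier (ball 0 1)) := by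
    intro z hz
    rw [frontier_ball _ one_ne_zero] at hz
    have hz1 : ‖z‖ = 1 := mem_sphere_zero_iff_norm.mp hz
    have h := congrArg conj ((hf_aff (sphere_subset_closedBall hz)).symm.trans (hb z hz1))
    have hzz : z * conj z = 1 := by rw [mul_conj, normSq_eq_norm_sq, hz1]; simp
    simp only [map_add, map_mul, map_neg, conj_conj] at h
    linear_combination z * h - (g z + conj b) * hzz
  have hg_aff := Complex.eqOn_closure_of_eqOn_frontier isBounded_ball hg'
    (by fun_prop : Differentiable ℂ fun z => -conj b - conj a * z).diffContOnCl hg_sphere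
  rw [closure_ball _ one_ne_zero] at hg_aff
  exact ⟨a, b, fun ζ hζ => ⟨hf_aff hζ, hg_aff hζ⟩⟩
end

section
/- Let n, d ≥ 1, let A₁,…,A_d be Hermitian n×n complex matrices, let c = (c₁,…,c_d) ∈ ℝᵈ, and set A = ∑_{j=1}^d c_j A_j. Consider the real vector subspace W of ℂⁿ × ℂᵈ × ℂⁿ × ℂᵈ given by W = {(v, i·s, −conj(A v), κ) : v ∈ ℂⁿ, s ∈ ℝᵈ, κ ∈ ℝᵈ}, where i·s = (i s₁, …, i s_d) and conj(Av) is the componentwise complex conjugate of Av ∈ ℂⁿ. Then W ∩ iW = {0} if and only if the matrix A is invertible. -/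
/-!
Writing `p ∈ W ∩ iW` as `p = (v, i s, -conj(Av), κ) = i (v', i s', -conj(Av'), κ')`, the
second and fourth components force `s = κ = 0`, since `ℝ ∩ iℝ = 0`. Conjugation is
antilinear, so the third component of the left side is `-conj (A (i v')) = i conj (A v')`,
while that of the right side is `-i conj (A v')`; hence `A v' = 0`, and `v = i v'`.
So `W ∩ iW` is the kernel of `A` placed in the first slot, and it vanishes exactly when `A`
is invertible.
-/
open Complex Matrix
open scoped Pointwise

section ConormalTangent

variable {m ι : Type*} [Fintype m]

def conormalTangent (A : Matrix m m ℂ) : Set ((m → ℂ) × (ι → ℂ) × (m → ℂ) × (ι → ℂ)) :=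
  {p | ∃ (v : m → ℂ) (s κ : ι → ℝ),
    p = (v, fun j => I * (s j : ℂ), fun i => -(starRingEnd ℂ ((A *ᵥ v) i)), fun j => (κ j : ℂ))}

lemma ofReal_eq_I_mul_ofReal_iff {a b : ℝ} : (a : ℂ) = I * b ↔ a = 0 ∧ b = 0 := by
  simp [Complex.ext_iff, eq_comm]

variable {A : Matrix m m ℂ}

lemma mk_mem_conormalTangent_inter_I_smul {v : m → ℂ} (hv : A *ᵥ v = 0) :
    ((v, 0, 0, 0) : (m → ℂ) × (ι → ℂ) × (m → ℂ) × (ι → ℂ)) ∈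
      conormalTangent A ∩ I • conormalTangent A := by
  refine ⟨⟨v, 0, 0, by simp [hv, funext_iff]⟩, ?_⟩
  refine Set.mem_smul_set.mpr ⟨(-I • v, 0, 0, 0), ⟨-I • v, 0, 0, ?_⟩, ?_⟩
  · simp [neg_smul, mulVec_neg, mulVec_smul, hv, funext_iff]
  · simp [smul_smul]

lemma eq_zero_of_mem_conormalTangent_inter_I_smul (hA : ∀ v, A *ᵥ v = 0 → v = 0)
    {p : (m → ℂ) × (ι → ℂ) × (m → ℂ) × (ι → ℂ)}
    (hp : p ∈ conormalTangent A ∩ I • conormalTangent A) : p = 0 := by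
  obtain ⟨⟨v, s, κ, rfl⟩, hp⟩ := hp
  obtain ⟨_, ⟨v', s', κ', rfl⟩, hq⟩ := Set.mem_smul_set.mp hp
  simp only [Prod.smul_mk, Prod.mk.injEq] at hq
  obtain ⟨rfl, hs', hAv, hκ'⟩ := hq
  have hAv' : A *ᵥ v' = 0 := by
    funext i
    have h := congrFun hAv i
    simp only [Pi.smul_apply, smul_eq_mul, mulVec_smul, map_mul, conj_I] at h
    have h2 : (2 * I) * starRingEnd ℂ ((A *ᵥ v') i) = 0 := by linear_combination -h
    simpa [I_ne_zero] using h2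
  have hs : s = 0 := funext fun j => by
    have h := congrFun hs' j
    simp only [Pi.smul_apply, smul_eq_mul] at h
    refine (ofReal_eq_I_mul_ofReal_iff (a := -s' j)).mp ?_ |>.2
    push_cast
    linear_combination h - (s' j : ℂ) * I_sq
  have hκ : κ = 0 := funext fun j => by
    have h := congrFun hκ' j
    simp only [Pi.smul_apply, smul_eq_mul] at h
    exact (ofReal_eq_I_mul_ofReal_iff.mp h.symm).1
  simp [hA v' hAv', hs, hκ, funext_iff]

theorem conormalTangent_inter_I_smul_eq_zero_iff :
    (conormalTangent A : Set ((m → ℂ) × (ι → ℂ) × (m → ℂ) × (ι → ℂ))) ∩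
        I • conormalTangent A = {0} ↔
      ∀ v, A *ᵥ v = 0 → v = 0 := by
  constructor
  · intro h v hv
    have hmem := mk_mem_conormalTangent_inter_I_smul (ι := ι) hv
    rw [h, Set.mem_singleton_iff] at hmem
    exact congrArg Prod.fst hmem
  · intro hA
    refine Set.eq_singleton_iff_unique_mem.mpr ⟨?_, fun p hp => ?_⟩
    · exact mk_mem_conormalTangent_inter_I_smul (mulVec_zero A)
    · exact eq_zero_of_mem_conormalTangent_inter_I_smul hA hp

end ConormalTangent

theorem stmt_14_general (n d : ℕ)
    (A : Matrix (Fin n) (Fin n) ℂ)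
    (W : Set ((Fin n → ℂ) × (Fin d → ℂ) × (Fin n → ℂ) × (Fin d → ℂ)))
    (hW : W = {p | ∃ (v : Fin n → ℂ) (s κ : Fin d → ℝ),
      p = (v, fun j => Complex.I * (s j : ℂ),
            fun i => -(starRingEnd ℂ (A.mulVec v i)),
            fun j => (κ j : ℂ))}) :
    W ∩ (Complex.I • W) = {0} ↔ IsUnit A := by
  subst hW
  rw [← conormalTangent, conormalTangent_inter_I_smul_eq_zero_iff,
    ← separatingRight_iff_forall_mulVec_eq_zero, separatingRight_iff_det_ne_zero,
    isUnit_iff_isUnit_det, isUnit_iff_ne_zero]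

/-- Linear-algebra content of Proposition 2.2 (Webster, Tumanov): the real
subspace `W = {(v, i·s, −conj(Av), κ) : v ∈ ℂⁿ, s, κ ∈ ℝᵈ}` of
`ℂⁿ × ℂᵈ × ℂⁿ × ℂᵈ` is totally real (`W ∩ iW = {0}`) if and only if
`A = ∑ cⱼAⱼ` is invertible. -/
theorem stmt_14 (n d : ℕ) (hn : 1 ≤ n) (hd : 1 ≤ d)
    (A' : Fin d → Matrix (Fin n) (Fin n) ℂ) (hA' : ∀ j, (A' j).IsHermitian)
    (c : Fin d → ℝ)
    (A : Matrix (Fin n) (Fin n) ℂ) (hA : A = ∑ j, (c j : ℂ) • A' j)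
    (W : Set ((Fin n → ℂ) × (Fin d → ℂ) × (Fin n → ℂ) × (Fin d → ℂ)))
    (hW : W = {p | ∃ (v : Fin n → ℂ) (s κ : Fin d → ℝ),
      p = (v, fun j => Complex.I * (s j : ℂ),
            fun i => -(starRingEnd ℂ (A.mulVec v i)),
            fun j => (κ j : ℂ))}) :
    W ∩ (Complex.I • W) = {0} ↔ IsUnit A :=
  stmt_14_general n d A W hW
end
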